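/- Define F : {(x,y) ∈ ℝ² : x² + y² < 2} × ℝ → ℂ² by F(x,y,θ) = (√(1 − (x²+y²)/2)·e^{iθ}, ((x − iy)/√2)·e^{iθ}). Then: (a) F takes values in the unit sphere S³ = {(z₁,z₂) ∈ ℂ² : |z₁|² + |z₂|² = 1}; (b) F(x,y,θ + 2π) = F(x,y,θ), and F(x,y,θ) = F(x′,y′,θ′) implies (x,y) = (x′,y′) and θ′ − θ ∈ 2πℤ; (c) the image of F equals S³ ∖ {(z₁,z₂) ∈ S³ : z₁ = 0}; (d) for every point (x,y,θ) in the domain and every (a,b,c) ∈ ℝ³ one has A_{F(x,y,θ)}(DF_{(x,y,θ)}(a,b,c)) = c − (1/2)(x·b − y·a), where A_{(z₁,z₂)}(w₁,w₂) := Im(conj(z₁)·w₁ + conj(z₂)·w₂); and (e) F(cos 2θ, sin 2θ, θ) = (e^{iθ}/√2, e^{−iθ}/√2) for all θ, i.e. F maps the Legendrian Λ₂ onto the Legendrian unknot {(e^{iθ}/√2, e^{−iθ}/√2)} ⊂ S³. -/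

import Mathlib

noncomputable section

/-- The standard contact form `x₁dy₁ - y₁dx₁ + x₂dy₂ - y₂dx₂` of `ℂ²` (restricted to `S³`),
evaluated at the point `q` on the vector `w`: `A_q(w) = Im(conj q₁ · w₁ + conj q₂ · w₂)`. -/
def Asph (q w : ℂ × ℂ) : ℝ :=
  ((starRingEnd ℂ) q.1 * w.1 + (starRingEnd ℂ) q.2 * w.2).im

/-- The domain `B²_{√2} × ℝ = {(x,y,θ) : x² + y² < 2}`. -/
def D15 : Set (ℝ × ℝ × ℝ) := {p : ℝ × ℝ × ℝ | p.1 ^ 2 + p.2.1 ^ 2 < 2}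

/-- The map `F(x,y,θ) = (√(1-(x²+y²)/2)·e^{iθ}, ((x-iy)/√2)·e^{iθ})`:
a contact-form-preserving embedding of the solid torus `B²_{√2} × S¹`
onto the complement of a Hopf fiber in `S³`. -/
def F15 (p : ℝ × ℝ × ℝ) : ℂ × ℂ :=
  ((Real.sqrt (1 - (p.1 ^ 2 + p.2.1 ^ 2) / 2) : ℂ) * Complex.exp (p.2.2 * Complex.I),
   (((p.1 : ℂ) - (p.2.1 : ℂ) * Complex.I) / (Real.sqrt 2 : ℂ)) * Complex.exp (p.2.2 * Complex.I))

open Complex ContinuousLinearMap in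
lemma normSq_exp (θ : ℝ) : Complex.normSq (Complex.exp (θ * Complex.I)) = 1 := by
  rw [Complex.normSq_eq_norm_sq, Complex.norm_exp_ofReal_mul_I]; norm_num

lemma partA : ∀ p ∈ D15, Complex.normSq (F15 p).1 + Complex.normSq (F15 p).2 = 1 := by
  intro p hp
  have hr : (0:ℝ) ≤ 1 - (p.1^2+p.2.1^2)/2 := by
    have : p.1 ^ 2 + p.2.1 ^ 2 < 2 := hp
    linarith
  simp only [F15, Complex.normSq_mul, Complex.normSq_div, normSq_exp, mul_one,
    Complex.normSq_ofReal]
  rw [Real.mul_self_sqrt hr, Real.mul_self_sqrt (by norm_num : (0:ℝ) ≤ 2)]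
  have : Complex.normSq ((p.1 : ℂ) - (p.2.1 : ℂ) * Complex.I) = p.1^2 + p.2.1^2 := by
    simp [Complex.normSq_apply]; ring
  rw [this]; ring


lemma partB1 : ∀ p : ℝ × ℝ × ℝ, F15 (p.1, p.2.1, p.2.2 + 2 * Real.pi) = F15 p := by
  intro p
  have h : Complex.exp (((p.2.2 : ℂ) + 2*(Real.pi:ℂ)) * Complex.I)
      = Complex.exp (p.2.2 * Complex.I) := by
    rw [add_mul, Complex.exp_add, Complex.exp_two_pi_mul_I, mul_one]
  simp [F15, h]


lemma partB2 : ∀ p ∈ D15, ∀ p' ∈ D15, F15 p = F15 p' →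
      p.1 = p'.1 ∧ p.2.1 = p'.2.1 ∧ ∃ n : ℤ, p'.2.2 - p.2.2 = n * (2 * Real.pi) := by
  intro p hp p' hp' h
  obtain ⟨h1, h2⟩ := Prod.ext_iff.mp h
  simp only [F15] at h1 h2
  have hs : (0:ℝ) < 1 - (p.1^2+p.2.1^2)/2 := by
    have : p.1 ^ 2 + p.2.1 ^ 2 < 2 := hp; linarith
  have hs' : (0:ℝ) < 1 - (p'.1^2+p'.2.1^2)/2 := by
    have : p'.1 ^ 2 + p'.2.1 ^ 2 < 2 := hp'; linarith
  have habs : Real.sqrt (1 - (p.1^2+p.2.1^2)/2) = Real.sqrt (1 - (p'.1^2+p'.2.1^2)/2) := by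
    have := congrArg (‖·‖) h1
    simpa [norm_mul, Complex.norm_exp_ofReal_mul_I, Complex.norm_real, Real.norm_eq_abs,
      abs_of_nonneg (Real.sqrt_nonneg _)] using this
  have hsne : ((Real.sqrt (1 - (p.1^2+p.2.1^2)/2) : ℝ) : ℂ) ≠ 0 := by
    simpa using (Real.sqrt_pos.mpr hs).ne'
  -- cancel to get exp equality
  have hexp : Complex.exp ((p.2.2:ℂ) * Complex.I) = Complex.exp ((p'.2.2:ℂ) * Complex.I) := by
    rw [habs] at h1
    exact mul_left_cancel₀ (by simpa using (Real.sqrt_pos.mpr hs').ne') h1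
  have hexpne : Complex.exp ((p.2.2:ℂ) * Complex.I) ≠ 0 := Complex.exp_ne_zero _
  have hxy : ((p.1:ℂ) - (p.2.1:ℂ) * Complex.I) = ((p'.1:ℂ) - (p'.2.1:ℂ) * Complex.I) := by
    rw [hexp] at h2
    have h2' := mul_right_cancel₀ (Complex.exp_ne_zero _) h2
    have hrt2 : ((Real.sqrt 2 : ℝ) : ℂ) ≠ 0 := by
      simpa using (Real.sqrt_pos.mpr (by norm_num : (0:ℝ) < 2)).ne'
    have := congrArg (fun z => z * ((Real.sqrt 2 : ℝ) : ℂ)) h2'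
    simpa [div_mul_cancel₀, hrt2] using this
  have hx : p.1 = p'.1 := by
    have := congrArg Complex.re hxy; simpa using this
  have hy : p.2.1 = p'.2.1 := by
    have := congrArg Complex.im hxy; simpa using this
  refine ⟨hx, hy, ?_⟩
  obtain ⟨n, hn⟩ := Complex.exp_eq_exp_iff_exists_int.mp hexp
  have key : ((p.2.2 : ℝ):ℂ) = ((p'.2.2 + n*(2*Real.pi) : ℝ) : ℂ) := by
    apply mul_right_cancel₀ Complex.I_ne_zero
    push_cast
    linear_combination hn
  have := Complex.ofReal_inj.mp key
  exact ⟨-n, by push_cast; linarith⟩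

lemma partC : F15 '' D15
      = {z : ℂ × ℂ | Complex.normSq z.1 + Complex.normSq z.2 = 1 ∧ z.1 ≠ 0} := by
  ext z
  constructor
  · rintro ⟨p, hp, rfl⟩
    refine ⟨partA p hp, ?_⟩
    have hs : (0:ℝ) < 1 - (p.1^2+p.2.1^2)/2 := by
      have : p.1 ^ 2 + p.2.1 ^ 2 < 2 := hp; linarith
    simp only [F15, mul_ne_zero_iff]
    exact ⟨by simpa using (Real.sqrt_pos.mpr hs).ne', Complex.exp_ne_zero _⟩
  · rintro ⟨hz, hz1⟩
    set θ := Complex.arg z.1 with hθ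
    set w := z.2 * (Real.sqrt 2 : ℂ) * Complex.exp (-((θ:ℂ) * Complex.I)) with hw
    refine ⟨(w.re, -w.im, θ), ?_, ?_⟩
    · have hval : Complex.normSq w = Complex.normSq z.2 * 2 := by
        simp only [hw, Complex.normSq_mul]
        rw [Complex.normSq_eq_norm_sq (Complex.exp _)]
        rw [show -((θ:ℂ) * Complex.I) = ((-θ : ℝ) : ℂ) * Complex.I by push_cast; ring,
          Complex.norm_exp_ofReal_mul_I]
        simp [Real.sq_sqrt (by norm_num : (0:ℝ) ≤ 2), Real.sqrt_sq]
      have h2 : Complex.normSq w = w.re^2 + w.im^2 := by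
        simp [Complex.normSq_apply]; ring
      have hnw : w.re^2 + (-w.im)^2 = 2 * Complex.normSq z.2 := by
        rw [h2] at hval; linear_combination hval
      show w.re ^ 2 + (-w.im) ^ 2 < 2
      rw [hnw]
      have h1 : 0 < Complex.normSq z.1 := Complex.normSq_pos.mpr hz1
      nlinarith [hz]
    · have hval : Complex.normSq w = Complex.normSq z.2 * 2 := by
        simp only [hw, Complex.normSq_mul]
        rw [Complex.normSq_eq_norm_sq (Complex.exp _)]
        rw [show -((θ:ℂ) * Complex.I) = ((-θ : ℝ) : ℂ) * Complex.I by push_cast; ring,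
          Complex.norm_exp_ofReal_mul_I]
        simp [Real.sq_sqrt (by norm_num : (0:ℝ) ≤ 2), Real.sqrt_sq]
      have h2 : Complex.normSq w = w.re^2 + w.im^2 := by
        simp [Complex.normSq_apply]; ring
      have hre : ((w.re : ℂ) - ((-w.im : ℝ) : ℂ) * Complex.I) = w := by
        simp [Complex.ext_iff]
      have habs : Real.sqrt (1 - (w.re^2 + (-w.im)^2)/2) = ‖z.1‖ := by
        have : 1 - (w.re^2 + (-w.im)^2)/2 = Complex.normSq z.1 := by
          rw [h2] at hval
          have : w.re^2 + (-w.im)^2 = 2 * Complex.normSq z.2 := by linear_combination hval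
          rw [this]; linarith [hz]
        rw [this, show Complex.normSq z.1 = (‖z.1‖)^2 from (Complex.sq_norm _).symm,
          Real.sqrt_sq (norm_nonneg _)]
      show F15 (w.re, -w.im, θ) = z
      simp only [F15]
      refine Prod.ext ?_ ?_
      · show ((Real.sqrt (1 - (w.re^2 + (-w.im)^2)/2) : ℝ) : ℂ) * Complex.exp ((θ:ℂ) * Complex.I) = z.1
        rw [habs, hθ]
        exact Complex.norm_mul_exp_arg_mul_I z.1
      · show ((w.re:ℂ) - ((-w.im:ℝ):ℂ) * Complex.I) / ((Real.sqrt 2 :ℝ):ℂ) * Complex.exp ((θ:ℂ) * Complex.I) = z.2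
        rw [hre, hw]
        have hrt2 : ((Real.sqrt 2 : ℝ) : ℂ) ≠ 0 := by
          simpa using (Real.sqrt_pos.mpr (by norm_num : (0:ℝ) < 2)).ne'
        field_simp
        rw [mul_assoc, ← Complex.exp_add]
        simp [mul_comm]

lemma partD : ∀ p ∈ D15, ∀ v : ℝ × ℝ × ℝ,
    Asph (F15 p) (fderiv ℝ F15 p v) = v.2.2 - (1/2) * (p.1 * v.2.1 - p.2.1 * v.1) := by
  intro p hp v
  have hs : (0:ℝ) < 1 - (p.1^2+p.2.1^2)/2 := by
    have : p.1 ^ 2 + p.2.1 ^ 2 < 2 := hp; linarith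
  set s : ℝ := Real.sqrt (1 - (p.1^2+p.2.1^2)/2) with hsdef
  have hspos : 0 < s := Real.sqrt_pos.mpr hs
  -- basic projections
  have h1 : HasFDerivAt (fun q : ℝ × ℝ × ℝ => q.1) (ContinuousLinearMap.fst ℝ ℝ (ℝ × ℝ)) p :=
    hasFDerivAt_fst
  have h2 : HasFDerivAt (fun q : ℝ × ℝ × ℝ => q.2.1)
      ((ContinuousLinearMap.fst ℝ ℝ ℝ).comp (ContinuousLinearMap.snd ℝ ℝ (ℝ × ℝ))) p :=
    hasFDerivAt_fst.comp p hasFDerivAt_snd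
  have h3 : HasFDerivAt (fun q : ℝ × ℝ × ℝ => q.2.2)
      ((ContinuousLinearMap.snd ℝ ℝ ℝ).comp (ContinuousLinearMap.snd ℝ ℝ (ℝ × ℝ))) p :=
    hasFDerivAt_snd.comp p hasFDerivAt_snd
  -- inner function g
  have hg : HasFDerivAt (fun q : ℝ × ℝ × ℝ => 1 - (q.1^2 + q.2.1^2)/2)
      ((0 : (ℝ × ℝ × ℝ) →L[ℝ] ℝ) - (1/2 : ℝ) • ((p.1 • ContinuousLinearMap.fst ℝ ℝ (ℝ × ℝ)
        + p.1 • ContinuousLinearMap.fst ℝ ℝ (ℝ × ℝ))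
        + (p.2.1 • ((ContinuousLinearMap.fst ℝ ℝ ℝ).comp (ContinuousLinearMap.snd ℝ ℝ (ℝ × ℝ)))
          + p.2.1 • ((ContinuousLinearMap.fst ℝ ℝ ℝ).comp (ContinuousLinearMap.snd ℝ ℝ (ℝ × ℝ)))))) p := by
    have := (hasFDerivAt_const (1:ℝ) p).sub (((h1.mul h1).add (h2.mul h2)).const_mul (1/2 : ℝ))
    exact this.congr_of_eventuallyEq (Filter.Eventually.of_forall fun q => by simp only [Pi.sub_apply, Pi.add_apply, Pi.mul_apply]; ring)
  -- sqrt of g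
  have hsq := (Real.hasDerivAt_sqrt hs.ne').comp_hasFDerivAt p hg
  -- complex coercion
  have hc1 := Complex.ofRealCLM.hasFDerivAt.comp p hsq
  -- the exponent q.2.2 * I
  have hlin := (Complex.ofRealCLM.hasFDerivAt.comp p h3).mul_const Complex.I
  -- exponential
  have hE := ((Complex.hasDerivAt_exp ((p.2.2 : ℂ) * Complex.I)).hasFDerivAt.restrictScalars
    ℝ).comp p hlin
  have hF1 := hc1.mul hE
  -- second component
  have hx := Complex.ofRealCLM.hasFDerivAt.comp p h1
  have hy := Complex.ofRealCLM.hasFDerivAt.comp p h2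
  have hl2' := (hx.sub (hy.mul_const Complex.I)).mul_const (((Real.sqrt 2 : ℝ) : ℂ))⁻¹
  have hl2 : HasFDerivAt (fun q : ℝ × ℝ × ℝ => ((q.1 : ℂ) - (q.2.1 : ℂ) * Complex.I) / ((Real.sqrt 2 : ℝ) : ℂ)) _ p :=
    hl2'.congr_of_eventuallyEq (Filter.Eventually.of_forall fun q => by simp [Function.comp, div_eq_mul_inv])
  have hF2 := hl2.mul hE
  have hF : HasFDerivAt F15 _ p := hF1.prodMk hF2
  rw [hF.fderiv]
  simp only [ContinuousLinearMap.prod_apply, ContinuousLinearMap.add_apply,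
    ContinuousLinearMap.comp_apply, ContinuousLinearMap.smul_apply,
    ContinuousLinearMap.coe_fst', ContinuousLinearMap.coe_snd',
    ContinuousLinearMap.coe_restrictScalars', ContinuousLinearMap.smulRight_apply, ContinuousLinearMap.toSpanSingleton_apply,
    ContinuousLinearMap.one_apply, ContinuousLinearMap.sub_apply, ContinuousLinearMap.zero_apply,
    Complex.ofRealCLM_apply, Function.comp, smul_eq_mul, Complex.real_smul, Asph, F15]
  simp only [map_mul, map_div₀, map_sub, Complex.conj_ofReal, Complex.conj_I]
  push_cast
  have hK1 : (starRingEnd ℂ) (Complex.exp ((p.2.2:ℂ) * Complex.I))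
      * Complex.exp ((p.2.2:ℂ) * Complex.I) = 1 := by
    rw [← Complex.exp_conj, ← Complex.exp_add,
      show (starRingEnd ℂ) ((p.2.2:ℂ) * Complex.I) + (p.2.2:ℂ) * Complex.I = 0 by
        simp [Complex.ext_iff]]
    exact Complex.exp_zero
  have hSne : ((Real.sqrt (1 - (p.1 ^ 2 + p.2.1 ^ 2) / 2) : ℝ) : ℂ) ≠ 0 :=
    Complex.ofReal_ne_zero.mpr hspos.ne'
  have hRne : ((Real.sqrt 2 : ℝ) : ℂ) ≠ 0 :=
    Complex.ofReal_ne_zero.mpr (Real.sqrt_pos.mpr (by norm_num : (0:ℝ) < 2)).ne'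
  have hS1 : ((Real.sqrt (1 - (p.1 ^ 2 + p.2.1 ^ 2) / 2) : ℝ) : ℂ)
      * (((Real.sqrt (1 - (p.1 ^ 2 + p.2.1 ^ 2) / 2) : ℝ) : ℂ))⁻¹ = 1 :=
    mul_inv_cancel₀ hSne
  have hSsq : ((Real.sqrt (1 - (p.1 ^ 2 + p.2.1 ^ 2) / 2) : ℝ) : ℂ)
      * ((Real.sqrt (1 - (p.1 ^ 2 + p.2.1 ^ 2) / 2) : ℝ) : ℂ)
      = 1 - ((p.1:ℂ) ^ 2 + (p.2.1:ℂ) ^ 2) / 2 := by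
    rw [← Complex.ofReal_mul, Real.mul_self_sqrt hs.le]; push_cast; ring
  have hR4 : (((Real.sqrt 2 : ℝ) : ℂ))⁻¹ * (((Real.sqrt 2 : ℝ) : ℂ))⁻¹ = 1/2 := by
    rw [← mul_inv, ← Complex.ofReal_mul, Real.mul_self_sqrt (by norm_num : (0:ℝ) ≤ 2)]
    norm_num
  set S : ℂ := ((Real.sqrt (1 - (p.1 ^ 2 + p.2.1 ^ 2) / 2) : ℝ) : ℂ) with hSdef
  set R : ℂ := ((Real.sqrt 2 : ℝ) : ℂ) with hRdef
  set X : ℂ := (p.1 : ℂ)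
  set Y : ℂ := (p.2.1 : ℂ)
  set A : ℂ := (v.1 : ℂ)
  set B : ℂ := (v.2.1 : ℂ)
  set C : ℂ := (v.2.2 : ℂ)
  set E : ℂ := Complex.exp ((p.2.2:ℂ) * Complex.I) with hEdef
  have hX : S * (starRingEnd ℂ) E *
          (S * (Complex.I * C * E) +
            E * (1 / (2 * S) *
                (0 - 1 / 2 * (X * A + X * A + (Y * B + Y * B))))) +
        (X - Y * -Complex.I) / R * (starRingEnd ℂ) E *
          ((X - Y * Complex.I) / R * (Complex.I * C * E) +
            E * ((R)⁻¹ * (A - Complex.I * B)))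
      = Complex.I * ((v.2.2 + (p.2.1 * v.1 - p.1 * v.2.1)/2 : ℝ) : ℂ) := by
    have hT : ((v.2.2 + (p.2.1 * v.1 - p.1 * v.2.1)/2 : ℝ) : ℂ)
        = C + (Y * A - X * B)/2 := by push_cast; ring
    rw [hT]
    linear_combination
      (S*S*Complex.I*C + (1/2)*S*S⁻¹*(-(X*A+Y*B))
        + (X+Y*Complex.I)*(X-Y*Complex.I)*R⁻¹*R⁻¹*Complex.I*C
        + (X+Y*Complex.I)*R⁻¹*R⁻¹*(A-Complex.I*B)) * hK1
      + (-(X*A+Y*B)/2) * hS1 + (Complex.I*C) * hSsq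
      + ((X+Y*Complex.I)*(X-Y*Complex.I)*Complex.I*C + (X+Y*Complex.I)*(A-Complex.I*B)) * hR4
      + (-(1/2)*Y*Y*Complex.I*C - Y*B/2) * Complex.I_mul_I
  rw [hX]
  simp [Complex.mul_im]
  ring

lemma partE : ∀ θ : ℝ, F15 (Real.cos (2 * θ), Real.sin (2 * θ), θ)
      = (Complex.exp (θ * Complex.I) / (Real.sqrt 2 : ℂ),
         Complex.exp (-(θ * Complex.I)) / (Real.sqrt 2 : ℂ)) := by
  intro θ
  have h1 : Real.cos (2*θ) ^ 2 + Real.sin (2*θ) ^ 2 = 1 := by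
    rw [add_comm]; exact Real.sin_sq_add_cos_sq _
  have hs : Real.sqrt (1 - (Real.cos (2*θ) ^ 2 + Real.sin (2*θ) ^ 2) / 2) = (Real.sqrt 2)⁻¹ := by
    rw [h1]; norm_num [Real.sqrt_inv]
  have h2 : ((Real.cos (2*θ) : ℂ) - (Real.sin (2*θ) : ℂ) * Complex.I)
      = Complex.exp (-(2*θ) * Complex.I) := by
    rw [Complex.exp_mul_I]
    push_cast
    rw [Complex.cos_neg, Complex.sin_neg]
    ring
  simp only [F15, hs, h2]
  refine Prod.ext ?_ ?_
  · push_cast; ring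
  · rw [div_mul_eq_mul_div, ← Complex.exp_add]
    ring_nf

/-- The map `F` (a) takes values in the unit sphere `S³ ⊆ ℂ²`; (b) is
`2π`-periodic and injective in `θ` modulo `2π`; (c) has image exactly `S³ ∖ {z₁ = 0}`;
(d) pulls the standard contact form `A` of `S³` back to `μ = dθ - (1/2)(x dy - y dx)`; and
(e) maps the Legendrian `Λ₂`, `θ ↦ (cos 2θ, sin 2θ, e^{iθ})`, onto the standard Legendrian
unknot `θ ↦ (e^{iθ}/√2, e^{-iθ}/√2)` in `S³`. -/
theorem stmt15 :
    (∀ p ∈ D15, Complex.normSq (F15 p).1 + Complex.normSq (F15 p).2 = 1) ∧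
    (∀ p : ℝ × ℝ × ℝ, F15 (p.1, p.2.1, p.2.2 + 2 * Real.pi) = F15 p) ∧
    (∀ p ∈ D15, ∀ p' ∈ D15, F15 p = F15 p' →
      p.1 = p'.1 ∧ p.2.1 = p'.2.1 ∧ ∃ n : ℤ, p'.2.2 - p.2.2 = n * (2 * Real.pi)) ∧
    (F15 '' D15
      = {z : ℂ × ℂ | Complex.normSq z.1 + Complex.normSq z.2 = 1 ∧ z.1 ≠ 0}) ∧
    (∀ p ∈ D15, ∀ v : ℝ × ℝ × ℝ,
      Asph (F15 p) (fderiv ℝ F15 p v) = v.2.2 - (1/2) * (p.1 * v.2.1 - p.2.1 * v.1)) ∧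
    (∀ θ : ℝ, F15 (Real.cos (2 * θ), Real.sin (2 * θ), θ)
      = (Complex.exp (θ * Complex.I) / (Real.sqrt 2 : ℂ),
         Complex.exp (-(θ * Complex.I)) / (Real.sqrt 2 : ℂ))) := by
  exact ⟨partA, partB1, partB2, partC, partD, partE⟩
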